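/- arXiv:0709.0393 — 6 statements merged into one kernel-verified Lean document; each statement's English description precedes it below -/
import Mathlib

section
/- Let λ > 0 and let ε : [0,∞) → ℝ be continuous with ε(t) → 0 as t → ∞. Let h : [0,∞) → ℝ be a C¹ solution of h' + h² = λ² + ε defined for all t ≥ 0. Then for every δ > 0 there exists T > 0 such that for all t > T, either |h(t) − λ| < δ or |h(t) + λ| < δ. -/
open Filter Set

/-! Once |ε| < λd/2, the right-hand side λ² + ε − h² is at most −λd/2 where h ≥ λ + d and at least
λd/2 where |h| ≤ λ − d. So h is driven down into (−∞, λ + d] and, once it reaches −λ + d, up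
into [λ − d, ∞), and it never leaves these half-lines again. Below −(λ + d) the equation gives
h' ≤ −κh² for some κ > 0, so −1/h would decrease at a fixed rate while staying positive: a solution
defined for all time can therefore never fall to −(λ + d). -/

theorem le_of_hasDerivAt_neg_of_eq {f f' : ℝ → ℝ} {s a : ℝ}
    (hf : ∀ u ≥ s, HasDerivAt f (f' u) u) (hs : f s ≤ a)
    (hbarrier : ∀ u ≥ s, f u = a → f' u < 0) : ∀ t ≥ s, f t ≤ a := fun _ ht =>
  image_le_of_deriv_right_lt_deriv_boundary (B := fun _ => a) (B' := fun _ => 0)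
    (fun u hu => (hf u hu.1).continuousAt.continuousWithinAt)
    (fun u hu => (hf u hu.1).hasDerivWithinAt) hs (fun _ => hasDerivAt_const _ _)
    (fun u hu => hbarrier u hu.1) ⟨ht, le_rfl⟩

theorem ge_of_hasDerivAt_pos_of_eq {f f' : ℝ → ℝ} {s a : ℝ}
    (hf : ∀ u ≥ s, HasDerivAt f (f' u) u) (hs : a ≤ f s)
    (hbarrier : ∀ u ≥ s, f u = a → 0 < f' u) : ∀ t ≥ s, a ≤ f t := by
  simpa using le_of_hasDerivAt_neg_of_eq (f := -f) (f' := -f') (a := -a)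
    (fun u hu => (hf u hu).neg) (neg_le_neg hs)
    (fun u hu hu' => neg_neg_of_pos (hbarrier u hu (neg_injective hu')))

theorem exists_le_of_hasDerivAt_le_neg {f f' : ℝ → ℝ} {s a c : ℝ} (hc : 0 < c)
    (hf : ∀ u ≥ s, HasDerivAt f (f' u) u) (hb : ∀ u ≥ s, a < f u → f' u ≤ -c) :
    ∃ t ≥ s, f t ≤ a := by
  by_contra! hgt
  have hst : s ≤ s + (f s - a) / c :=
    le_add_of_nonneg_right (div_nonneg (sub_nonneg.2 (hgt s le_rfl).le) hc.le)
  have hdecay := (convex_Ici s).image_sub_le_mul_sub_of_deriv_le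
    (fun u hu => (hf u hu).continuousAt.continuousWithinAt)
    (fun u hu => (hf u (interior_subset hu)).differentiableAt.differentiableWithinAt)
    (fun u hu => (hf u (interior_subset hu)).deriv ▸
      hb u (interior_subset hu) (hgt u (interior_subset hu)))
    s self_mem_Ici _ hst hst
  rw [add_sub_cancel_left, neg_mul, mul_div_cancel₀ _ hc.ne'] at hdecay
  linarith [hgt _ hst]

theorem eventually_le_of_hasDerivAt_le_neg {f f' : ℝ → ℝ} {s a c : ℝ} (hc : 0 < c)
    (hf : ∀ u ≥ s, HasDerivAt f (f' u) u) (hb : ∀ u ≥ s, a ≤ f u → f' u ≤ -c) :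
    ∀ᶠ t in atTop, f t ≤ a := by
  obtain ⟨t₀, ht₀, hft₀⟩ := exists_le_of_hasDerivAt_le_neg hc hf fun u hu hau => hb u hu hau.le
  refine eventually_atTop.2 ⟨t₀, le_of_hasDerivAt_neg_of_eq (fun u hu => hf u (ht₀.trans hu)) hft₀
    fun u hu hfu => ?_⟩
  linarith [hb u (ht₀.trans hu) hfu.ge]

theorem eventually_ge_of_hasDerivAt_ge_pos {f f' : ℝ → ℝ} {s a c : ℝ} (hc : 0 < c)
    (hf : ∀ u ≥ s, HasDerivAt f (f' u) u) (hb : ∀ u ≥ s, f u ≤ a → c ≤ f' u) :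
    ∀ᶠ t in atTop, a ≤ f t := by
  filter_upwards [eventually_le_of_hasDerivAt_le_neg (f := -f) (f' := -f') (a := -a) hc
    (fun u hu => (hf u hu).neg) fun u hu hau => by
      simpa using hb u hu (by simpa using hau)] with t ht
  simpa using ht

theorem eventually_ge_of_ge_of_hasDerivAt_ge_pos {f f' : ℝ → ℝ} {s a b c : ℝ} (hc : 0 < c)
    (hba : b ≤ a) (hf : ∀ u ≥ s, HasDerivAt f (f' u) u) (hs : b ≤ f s)
    (hb : ∀ u ≥ s, b ≤ f u → f u ≤ a → c ≤ f' u) : ∀ᶠ t in atTop, a ≤ f t := by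
  have hstay : ∀ t ≥ s, b ≤ f t := ge_of_hasDerivAt_pos_of_eq hf hs fun u hu hfu =>
    hc.trans_le (hb u hu hfu.ge (hfu.le.trans hba))
  exact eventually_ge_of_hasDerivAt_ge_pos hc hf fun u hu => hb u hu (hstay u hu)

theorem not_forall_neg_of_hasDerivAt_le_neg_mul_sq {f f' : ℝ → ℝ} {s κ : ℝ} (hκ : 0 < κ)
    (hf : ∀ u ≥ s, HasDerivAt f (f' u) u) (hb : ∀ u ≥ s, f' u ≤ -κ * f u ^ 2) :
    ¬ ∀ u ≥ s, f u < 0 := by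
  intro hneg
  have hinv : ∀ u ≥ s, HasDerivAt (-f⁻¹) (f' u / f u ^ 2) u := fun u hu => by
    simpa only [neg_div, neg_neg] using ((hf u hu).inv (hneg u hu).ne).neg
  obtain ⟨t, ht, hft⟩ := exists_le_of_hasDerivAt_le_neg (a := 0) hκ hinv fun u hu _ =>
    (div_le_iff₀ (sq_pos_of_neg (hneg u hu))).2 (hb u hu)
  rw [Pi.neg_apply, Pi.inv_apply, neg_nonpos] at hft
  linarith [inv_lt_zero.2 (hneg t ht)]

theorem neg_lt_of_hasDerivAt_le_neg_mul_sq {f f' : ℝ → ℝ} {s a κ : ℝ} (ha : 0 < a) (hκ : 0 < κ)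
    (hf : ∀ u ≥ s, HasDerivAt f (f' u) u) (hb : ∀ u ≥ s, f u ≤ -a → f' u ≤ -κ * f u ^ 2) :
    ∀ t ≥ s, -a < f t := by
  intro t ht
  by_contra! hft
  have hf' : ∀ u ≥ t, HasDerivAt f (f' u) u := fun u hu => hf u (ht.trans hu)
  have htrapped : ∀ u ≥ t, f u ≤ -a := le_of_hasDerivAt_neg_of_eq hf' hft fun u hu hfu => by
    have := hb u (ht.trans hu) hfu.le
    rw [hfu, neg_sq] at this
    linarith [mul_pos hκ (pow_pos ha 2)]
  exact not_forall_neg_of_hasDerivAt_le_neg_mul_sq hκ hf'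
    (fun u hu => hb u (ht.trans hu) (htrapped u hu)) fun u hu => by linarith [htrapped u hu]

theorem exists_pos_forall_gt_of_eventually_atTop {p : ℝ → Prop} (hp : ∀ᶠ t in atTop, p t) :
    ∃ T > 0, ∀ t > T, p t := by
  obtain ⟨T, hT⟩ := eventually_atTop.1 hp
  exact ⟨max T 1, by positivity, fun t ht => hT t ((le_max_left _ _).trans ht.le)⟩

section RiccatiRHS

variable {lam d e y : ℝ}

theorem riccati_rhs_le_of_ge (hlam : 0 < lam) (hd : 0 < d) (he : e < lam * d / 2)
    (hy : lam + d ≤ y) : lam ^ 2 + e - y ^ 2 ≤ -(lam * d / 2) := by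
  nlinarith

theorem riccati_rhs_le_neg_mul_sq_of_le (hlam : 0 < lam) (hd : 0 < d) (he : e < lam * d / 2)
    (hy : y ≤ -(lam + d)) : lam ^ 2 + e - y ^ 2 ≤ -(lam * d / 2 / (lam + d) ^ 2) * y ^ 2 := by
  have hS : 0 < (lam + d) ^ 2 := by positivity
  have hsq : (lam + d) ^ 2 ≤ y ^ 2 := by nlinarith
  rw [neg_mul, div_mul_eq_mul_div, ← neg_div, le_div_iff₀ hS]
  nlinarith [mul_nonneg (sub_nonneg.2 hsq) (by nlinarith : (0:ℝ) ≤ (lam + d) ^ 2 - lam * d / 2),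
    mul_le_mul_of_nonneg_right (by nlinarith : lam ^ 2 + e - (lam + d) ^ 2 + lam * d / 2 ≤ 0) hS.le]

theorem riccati_rhs_ge_of_abs_le (hd : 0 ≤ d) (he : -(lam * d / 2) < e)
    (hy : |y| ≤ lam - d) : lam * d / 2 ≤ lam ^ 2 + e - y ^ 2 := by
  have hsq : y ^ 2 ≤ (lam - d) ^ 2 := sq_abs y ▸ pow_le_pow_left₀ (abs_nonneg y) hy 2
  nlinarith [mul_nonneg hd ((abs_nonneg y).trans hy)]

end RiccatiRHS

theorem riccati_approaches_pm_lambda_general (lam : ℝ) (hlam : 0 < lam) (eps h : ℝ → ℝ)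
    (heps : Tendsto eps atTop (nhds 0))
    (hode : ∀ t ∈ Set.Ici (0:ℝ), HasDerivAt h (lam ^ 2 + eps t - h t ^ 2) t) :
    ∀ δ > (0:ℝ), ∃ T > (0:ℝ), ∀ t > T, |h t - lam| < δ ∨ |h t + lam| < δ := by
  intro δ hδ
  apply exists_pos_forall_gt_of_eventually_atTop
  obtain ⟨d, hd, hdδ, hdlam⟩ : ∃ d, 0 < d ∧ d < δ ∧ d ≤ lam / 2 :=
    ⟨min δ lam / 2, by positivity, by linarith [min_le_left δ lam, min_le_right δ lam],
      by linarith [min_le_right δ lam]⟩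
  have hc : 0 < lam * d / 2 := by positivity
  obtain ⟨T₀, hT₀⟩ := eventually_atTop.1 <|
    (heps.eventually (Ioo_mem_nhds (neg_neg_of_pos hc) hc)).and (eventually_ge_atTop 0)
  have hf : ∀ u ≥ T₀, HasDerivAt h (lam ^ 2 + eps u - h u ^ 2) u := fun u hu =>
    hode u (hT₀ u hu).2
  have hlow : ∀ t ≥ T₀, -(lam + d) < h t :=
    neg_lt_of_hasDerivAt_le_neg_mul_sq (by positivity) (by positivity) hf fun u hu hhu =>
      riccati_rhs_le_neg_mul_sq_of_le hlam hd (hT₀ u hu).1.2 hhu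
  have hhigh : ∀ᶠ t in atTop, h t ≤ lam + d :=
    eventually_le_of_hasDerivAt_le_neg hc hf fun u hu hhu =>
      riccati_rhs_le_of_ge hlam hd (hT₀ u hu).1.2 hhu
  by_cases hmid : ∃ s ≥ T₀, -(lam - d) ≤ h s
  · obtain ⟨s, hs, hhs⟩ := hmid
    have hrise : ∀ᶠ t in atTop, lam - d ≤ h t :=
      eventually_ge_of_ge_of_hasDerivAt_ge_pos hc (by linarith) (fun u hu => hf u (hs.trans hu))
        hhs fun u hu hlo hhi =>
          riccati_rhs_ge_of_abs_le hd.le (hT₀ u (hs.trans hu)).1.1 (abs_le.2 ⟨hlo, hhi⟩)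
    filter_upwards [hhigh, hrise] with t hle hge
    exact Or.inl (abs_lt.2 ⟨by linarith, by linarith⟩)
  · push Not at hmid
    filter_upwards [eventually_ge_atTop T₀] with t ht
    exact Or.inr (abs_lt.2 ⟨by linarith [hlow t ht], by linarith [hmid t ht]⟩)

theorem riccati_approaches_pm_lambda (lam : ℝ) (hlam : 0 < lam) (eps h : ℝ → ℝ)
    (heps_cont : ContinuousOn eps (Set.Ici 0))
    (heps : Tendsto eps atTop (nhds 0))
    (hode : ∀ t ∈ Set.Ici (0:ℝ), HasDerivAt h (lam ^ 2 + eps t - h t ^ 2) t) :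
    ∀ δ > (0:ℝ), ∃ T > (0:ℝ), ∀ t > T, |h t - lam| < δ ∨ |h t + lam| < δ :=
  riccati_approaches_pm_lambda_general lam hlam eps h heps hode
end

section
/- Let 0 < k < 1 and set λ = √(1−k). Let f : [0,∞) → (0,∞) be a C² function satisfying f''(t)/f(t) = (1−k) + ε(t), where ε(t) → 0 as t → ∞, and suppose f(t) → 0 and f'(t) → 0 as t → ∞. Then for every δ ∈ (0, λ) there exist T > 0 and constants B > A > 0 such that for all t > T: A·e^{−(λ+δ)t} ≤ f(t) ≤ B·e^{−(λ−δ)t}, A·e^{−(λ+δ)t} ≤ −f'(t) ≤ B·e^{−(λ−δ)t}, and A·e^{−(λ+δ)t} ≤ f''(t) ≤ B·e^{−(λ−δ)t}. -/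
/-!
On `[T, ∞)` with `T` large, `f'' = (λ² + ε) f` is pinched between `(λ - δ)² f` and
`(λ + δ)² f`. For `c ≥ 0` one has `((f' + c f) e^{-ct})' = (f'' - c² f) e^{-ct}`, and
`(f' + c f) e^{-ct} → 0` because `f, f' → 0`; so `c² f ≤ f''` forces `f' + c f ≤ 0` and
`f'' ≤ c² f` forces `f' + c f ≥ 0`. Hence `(λ - δ) f ≤ -f' ≤ (λ + δ) f`, which integrates to
`f T e^{-(λ+δ)(t-T)} ≤ f t ≤ f T e^{-(λ-δ)(t-T)}`, and the bounds on `-f'` and `f''` follow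
from their comparability with `f`.
-/

open Real Filter Set Topology

theorem MonotoneOn.le_of_tendsto_atTop {α β : Type*} [Preorder α] [(atTop : Filter α).NeBot]
    [TopologicalSpace β] [Preorder β] [OrderClosedTopology β] {g : α → β} {a b : α} {l : β}
    (hg : MonotoneOn g (Ici a)) (hl : Tendsto g atTop (𝓝 l)) (hb : a ≤ b) : g b ≤ l :=
  ge_of_tendsto hl ((eventually_ge_atTop b).mono fun _ hs => hg hb (hb.trans hs) hs)

section ExponentialComparison

variable {f f' f'' : ℝ → ℝ} {t₀ c : ℝ}

theorem monotoneOn_mul_exp_of_deriv_add_mul_nonneg {g g' : ℝ → ℝ} {μ : ℝ}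
    (hg : ∀ t ≥ t₀, HasDerivAt g (g' t) t) (h : ∀ t ≥ t₀, 0 ≤ g' t + μ * g t) :
    MonotoneOn (fun t => g t * exp (μ * t)) (Ici t₀) := by
  have hderiv : ∀ t ≥ t₀, HasDerivAt (fun s => g s * exp (μ * s))
      ((g' t + μ * g t) * exp (μ * t)) t := fun t ht =>
    ((hg t ht).mul (((hasDerivAt_id t).const_mul μ).exp)).congr_deriv
      (by simp only [id, mul_one]; ring)
  refine monotoneOn_of_hasDerivWithinAt_nonneg (convex_Ici t₀)
    (f' := fun t => (g' t + μ * g t) * exp (μ * t))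
    (fun t ht => (hderiv t ht).continuousAt.continuousWithinAt) (fun t ht => ?_) fun t ht => ?_
  all_goals rw [interior_Ici, mem_Ioi] at ht
  · exact (hderiv t ht.le).hasDerivWithinAt
  · exact mul_nonneg (h t ht.le) (exp_pos _).le

theorem mul_exp_le_of_neg_le_mul (hf : ∀ t ≥ t₀, HasDerivAt f (f' t) t)
    (h : ∀ t ≥ t₀, -f' t ≤ c * f t) {t : ℝ} (ht : t₀ ≤ t) :
    f t₀ * exp (c * t₀) * exp (-c * t) ≤ f t := by
  have hmono := monotoneOn_mul_exp_of_deriv_add_mul_nonneg (μ := c) hf fun s hs => by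
    linarith [h s hs]
  calc f t₀ * exp (c * t₀) * exp (-c * t)
      ≤ f t * exp (c * t) * exp (-c * t) :=
        mul_le_mul_of_nonneg_right (hmono self_mem_Ici ht ht) (exp_pos _).le
    _ = f t := by rw [mul_assoc, ← exp_add]; simp

theorem le_mul_exp_of_mul_le_neg (hf : ∀ t ≥ t₀, HasDerivAt f (f' t) t)
    (h : ∀ t ≥ t₀, c * f t ≤ -f' t) {t : ℝ} (ht : t₀ ≤ t) :
    f t ≤ f t₀ * exp (c * t₀) * exp (-c * t) := by
  have := mul_exp_le_of_neg_le_mul (f := fun s => -f s) (f' := fun s => -f' s) (c := c)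
    (fun s hs => (hf s hs).neg) (fun s hs => by linarith [h s hs]) ht
  linarith

theorem mul_le_neg_of_sq_mul_le (hf : ∀ t ≥ t₀, HasDerivAt f (f' t) t)
    (hf' : ∀ t ≥ t₀, HasDerivAt f' (f'' t) t) (hf0 : Tendsto f atTop (𝓝 0))
    (hf'0 : Tendsto f' atTop (𝓝 0)) (hc : 0 ≤ c) (h : ∀ t ≥ t₀, c ^ 2 * f t ≤ f'' t)
    {t : ℝ} (ht : t₀ ≤ t) : c * f t ≤ -f' t := by
  have hmono := monotoneOn_mul_exp_of_deriv_add_mul_nonneg (g := fun s => f' s + c * f s)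
    (μ := -c) (fun s hs => (hf' s hs).add ((hf s hs).const_mul c))
    fun s hs => by linarith [h s hs]
  have hlim : Tendsto (fun s => (f' s + c * f s) * exp (-c * s)) atTop (𝓝 0) := by
    refine Tendsto.zero_mul_isBoundedUnder_le (by simpa using hf'0.add (hf0.const_mul c)) ?_
    refine isBoundedUnder_of_eventually_le (a := 1) ((eventually_ge_atTop 0).mono fun s hs => ?_)
    simp only [Function.comp, norm_eq_abs, abs_exp, exp_le_one_iff]
    nlinarith
  have hw : f' t + c * f t ≤ 0 :=
    nonpos_of_mul_nonpos_left (hmono.le_of_tendsto_atTop hlim ht) (exp_pos _)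
  linarith

theorem neg_le_mul_of_le_sq_mul (hf : ∀ t ≥ t₀, HasDerivAt f (f' t) t)
    (hf' : ∀ t ≥ t₀, HasDerivAt f' (f'' t) t) (hf0 : Tendsto f atTop (𝓝 0))
    (hf'0 : Tendsto f' atTop (𝓝 0)) (hc : 0 ≤ c) (h : ∀ t ≥ t₀, f'' t ≤ c ^ 2 * f t)
    {t : ℝ} (ht : t₀ ≤ t) : -f' t ≤ c * f t := by
  have := mul_le_neg_of_sq_mul_le (f := fun s => -f s) (f' := fun s => -f' s)
    (f'' := fun s => -f'' s) (fun s hs => (hf s hs).neg) (fun s hs => (hf' s hs).neg)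
    (by simpa using hf0.neg) (by simpa using hf'0.neg) hc (fun s hs => by linarith [h s hs]) ht
  linarith

end ExponentialComparison

theorem mul_le_and_le_mul_of_pow_mul_le {a b m M L U B u v x y : ℝ} {j : ℕ} (hj : j ≤ 2)
    (hm0 : 0 ≤ m) (hm1 : m ≤ 1) (hma : m ≤ a) (hb : 0 ≤ b) (hM1 : 1 ≤ M) (hbM : b ≤ M)
    (hB : M ^ 2 * U ≤ B) (hL : 0 ≤ L) (hu : 0 ≤ u) (hv : 0 ≤ v) (hy : L * u ≤ y ∧ y ≤ U * v)
    (hx : a ^ j * y ≤ x ∧ x ≤ b ^ j * y) : m ^ 2 * L * u ≤ x ∧ x ≤ B * v := by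
  have hLu : 0 ≤ L * u := mul_nonneg hL hu
  have hma' : m ^ 2 ≤ a ^ j :=
    (pow_le_pow_of_le_one hm0 hm1 hj).trans (pow_le_pow_left₀ hm0 hma j)
  have hbM' : b ^ j ≤ M ^ 2 :=
    (pow_le_pow_left₀ hb hbM j).trans (pow_le_pow_right₀ hM1 hj)
  constructor
  · calc m ^ 2 * L * u = m ^ 2 * (L * u) := mul_assoc _ _ _
      _ ≤ a ^ j * y := mul_le_mul hma' hy.1 hLu (pow_nonneg (hm0.trans hma) j)
      _ ≤ x := hx.1
  · calc x ≤ b ^ j * y := hx.2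
      _ ≤ M ^ 2 * (U * v) := mul_le_mul hbM' hy.2 (hLu.trans hy.1) (by positivity)
      _ ≤ B * v := by rw [← mul_assoc]; exact mul_le_mul_of_nonneg_right hB hv

theorem exists_exp_bounds_of_sq_mul_le_le_sq_mul {f f' f'' : ℝ → ℝ} {T a b : ℝ}
    (hf : ∀ t ≥ T, HasDerivAt f (f' t) t) (hf' : ∀ t ≥ T, HasDerivAt f' (f'' t) t)
    (hf0 : Tendsto f atTop (𝓝 0)) (hf'0 : Tendsto f' atTop (𝓝 0)) (ha : 0 < a) (hb : 0 ≤ b)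
    (hfT : 0 < f T) (h : ∀ t ≥ T, a ^ 2 * f t ≤ f'' t ∧ f'' t ≤ b ^ 2 * f t) :
    ∃ A B : ℝ, 0 < A ∧ A < B ∧ ∀ t ≥ T,
      (A * exp (-b * t) ≤ f t ∧ f t ≤ B * exp (-a * t)) ∧
      (A * exp (-b * t) ≤ -f' t ∧ -f' t ≤ B * exp (-a * t)) ∧
      (A * exp (-b * t) ≤ f'' t ∧ f'' t ≤ B * exp (-a * t)) := by
  have hslope : ∀ t ≥ T, a * f t ≤ -f' t ∧ -f' t ≤ b * f t := fun t ht =>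
    ⟨mul_le_neg_of_sq_mul_le hf hf' hf0 hf'0 ha.le (fun s hs => (h s hs).1) ht,
      neg_le_mul_of_le_sq_mul hf hf' hf0 hf'0 hb (fun s hs => (h s hs).2) ht⟩
  have hdecay : ∀ t ≥ T, f T * exp (b * T) * exp (-b * t) ≤ f t ∧
      f t ≤ f T * exp (a * T) * exp (-a * t) := fun t ht =>
    ⟨mul_exp_le_of_neg_le_mul hf (fun s hs => (hslope s hs).2) ht,
      le_mul_exp_of_mul_le_neg hf (fun s hs => (hslope s hs).1) ht⟩
  set L := f T * exp (b * T)
  set U := f T * exp (a * T)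
  have hL : 0 < L := mul_pos hfT (exp_pos _)
  have hU : 0 < U := mul_pos hfT (exp_pos _)
  have hm : 0 < min 1 a := lt_min one_pos ha
  refine ⟨min 1 a ^ 2 * L, max 1 b ^ 2 * U + min 1 a ^ 2 * L, by positivity,
    lt_add_of_pos_left _ (by positivity), fun t ht => ?_⟩
  have bound {j : ℕ} (hj : j ≤ 2) {x : ℝ} :=
    mul_le_and_le_mul_of_pow_mul_le (x := x) (B := max 1 b ^ 2 * U + min 1 a ^ 2 * L) hj hm.le
      (min_le_left _ _) (min_le_right _ _) hb (le_max_left _ _) (le_max_right _ _)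
      (le_add_of_nonneg_right (by positivity)) hL.le (exp_pos _).le (exp_pos _).le (hdecay t ht)
  exact ⟨bound (j := 0) (x := f t) (by norm_num) (by simp),
    bound (j := 1) (by norm_num) (by simpa using hslope t ht),
    bound (j := 2) (by norm_num) (h t ht)⟩

theorem constant_curvature_profile_decays_exponentially_general
    (k : ℝ) (hk1 : k < 1) (lam : ℝ) (hlam : lam = Real.sqrt (1 - k))
    (f eps : ℝ → ℝ) (hf : ContDiff ℝ 2 f) (hpos : ∀ t ≥ (0:ℝ), 0 < f t)
    (hode : ∀ t ≥ (0:ℝ), deriv (deriv f) t / f t = (1 - k) + eps t)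
    (heps : Tendsto eps atTop (nhds 0))
    (hf0 : Tendsto f atTop (nhds 0)) (hf'0 : Tendsto (deriv f) atTop (nhds 0)) :
    ∀ δ ∈ Set.Ioo (0:ℝ) lam, ∃ T > (0:ℝ), ∃ A B : ℝ, 0 < A ∧ A < B ∧
      ∀ t > T,
        (A * Real.exp (-(lam + δ) * t) ≤ f t ∧ f t ≤ B * Real.exp (-(lam - δ) * t)) ∧
        (A * Real.exp (-(lam + δ) * t) ≤ -deriv f t ∧
          -deriv f t ≤ B * Real.exp (-(lam - δ) * t)) ∧
        (A * Real.exp (-(lam + δ) * t) ≤ deriv (deriv f) t ∧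
          deriv (deriv f) t ≤ B * Real.exp (-(lam - δ) * t)) := by
  rintro δ ⟨hδ, hδlam⟩
  have hlam2 : lam ^ 2 = 1 - k := by rw [hlam, sq_sqrt (by linarith)]
  obtain ⟨T, hT, hε⟩ : ∃ T > 0, ∀ t ≥ T, eps t ∈ Icc (-(lam * δ)) (lam * δ) := by
    obtain ⟨T, hT⟩ := ((eventually_gt_atTop 0).and (heps.eventually
      (Icc_mem_nhds (show -(lam * δ) < 0 by nlinarith) (show 0 < lam * δ by nlinarith))))
      |>.exists_forall_of_atTop
    exact ⟨T, (hT T le_rfl).1, fun t ht => (hT t ht).2⟩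
  have hpinch : ∀ t ≥ T, (lam - δ) ^ 2 * f t ≤ deriv (deriv f) t ∧
      deriv (deriv f) t ≤ (lam + δ) ^ 2 * f t := fun t ht => by
    have hft := hpos t (hT.le.trans ht)
    rw [← div_mul_cancel₀ (deriv (deriv f) t) hft.ne', hode t (hT.le.trans ht), ← hlam2]
    constructor <;> apply mul_le_mul_of_nonneg_right _ hft.le <;>
      nlinarith [(hε t ht).1, (hε t ht).2]
  obtain ⟨A, B, hA, hAB, hbounds⟩ := exists_exp_bounds_of_sq_mul_le_le_sq_mul
    (fun t _ => (hf.differentiable (by norm_num) t).hasDerivAt)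
    (fun t _ => (hf.differentiable_deriv_two t).hasDerivAt) hf0 hf'0 (by linarith) (by linarith)
    (hpos T hT.le) hpinch
  exact ⟨T, hT, A, B, hA, hAB, fun t ht => hbounds t ht.le⟩

theorem constant_curvature_profile_decays_exponentially
    (k : ℝ) (hk : 0 < k) (hk1 : k < 1) (lam : ℝ) (hlam : lam = Real.sqrt (1 - k))
    (f eps : ℝ → ℝ) (hf : ContDiff ℝ 2 f) (hpos : ∀ t ≥ (0:ℝ), 0 < f t)
    (hode : ∀ t ≥ (0:ℝ), deriv (deriv f) t / f t = (1 - k) + eps t)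
    (heps : Tendsto eps atTop (nhds 0))
    (hf0 : Tendsto f atTop (nhds 0)) (hf'0 : Tendsto (deriv f) atTop (nhds 0)) :
    ∀ δ ∈ Set.Ioo (0:ℝ) lam, ∃ T > (0:ℝ), ∃ A B : ℝ, 0 < A ∧ A < B ∧
      ∀ t > T,
        (A * Real.exp (-(lam + δ) * t) ≤ f t ∧ f t ≤ B * Real.exp (-(lam - δ) * t)) ∧
        (A * Real.exp (-(lam + δ) * t) ≤ -deriv f t ∧
          -deriv f t ≤ B * Real.exp (-(lam - δ) * t)) ∧
        (A * Real.exp (-(lam + δ) * t) ≤ deriv (deriv f) t ∧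
          deriv (deriv f) t ≤ B * Real.exp (-(lam - δ) * t)) :=
  constant_curvature_profile_decays_exponentially_general k hk1 lam hlam f eps hf hpos hode heps hf0
    hf'0
end

section
/- With the reparametrization Ψ(t,R,θ) = Φ(t, arsinh(R), θ) of the Fermi coordinates about a geodesic in ℍ³, the pullback metric Ψ*g is diagonal with Ψ*g(∂_t,∂_t) = 1+R², Ψ*g(∂_R,∂_R) = (1+R²)^{−1}, and Ψ*g(∂_θ,∂_θ) = R². -/
/-!
Since `Φ(t, r, θ) = eᵗ Φ(0, r, θ)`, we have `∂ₜΦ = Φ`, and a direct computation shows that the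
Fermi coordinates are orthogonal, with metric `cosh² r dt² + dr² + sinh² r dθ²`. Substituting
`r = arsinh R`, where `dr/dR = 1/√(1 + R²) = 1/cosh r`, gives the claim.
-/

open Real

/-- Fermi (polar) coordinates about the geodesic from `0` to `∞` in the upper
half-space model of `ℍ³`. -/
noncomputable def Phi (p : ℝ × ℝ × ℝ) : ℝ × ℝ × ℝ :=
  (Real.exp p.1 * Real.tanh p.2.1 * Real.cos p.2.2,
   Real.exp p.1 * Real.tanh p.2.1 * Real.sin p.2.2,
   Real.exp p.1 / Real.cosh p.2.1)

/-- The reparametrised polar coordinates `Ψ(t,R,θ) = Φ(t, arsinh R, θ)`. -/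
noncomputable def Psi (p : ℝ × ℝ × ℝ) : ℝ × ℝ × ℝ :=
  Phi (p.1, Real.arsinh p.2.1, p.2.2)

/-- The Euclidean dot product on `ℝ³`. -/
def dot3 (v w : ℝ × ℝ × ℝ) : ℝ := v.1 * w.1 + v.2.1 * w.2.1 + v.2.2 * w.2.2

theorem Real.hasDerivAt_tanh (x : ℝ) : HasDerivAt tanh (cosh x ^ 2)⁻¹ x := by
  have h := (hasDerivAt_sinh x).div (hasDerivAt_cosh x) (cosh_pos x).ne'
  rw [show tanh = sinh / cosh from funext tanh_eq_sinh_div_cosh]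
  refine h.congr_deriv ?_
  field_simp
  linear_combination cosh_sq x

theorem Real.differentiable_tanh : Differentiable ℝ tanh :=
  fun x => (hasDerivAt_tanh x).differentiableAt

theorem fderiv_apply_eq_of_hasDerivAt_comp {𝕜 E F : Type*} [NontriviallyNormedField 𝕜]
    [NormedAddCommGroup E] [NormedSpace 𝕜 E] [NormedAddCommGroup F] [NormedSpace 𝕜 F]
    {f : E → F} {γ : 𝕜 → E} {s : 𝕜} {v : E} {w : F} (hf : DifferentiableAt 𝕜 f (γ s))
    (hγ : HasDerivAt γ v s) (hfγ : HasDerivAt (fun u => f (γ u)) w s) :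
    fderiv 𝕜 f (γ s) v = w :=
  (hf.hasFDerivAt.comp_hasDerivAt s hγ).unique hfγ

noncomputable def hyperbolicMetric (p v w : ℝ × ℝ × ℝ) : ℝ := p.2.2⁻¹ ^ 2 * dot3 v w

theorem hyperbolicMetric_smul_left (p v w : ℝ × ℝ × ℝ) (c : ℝ) :
    hyperbolicMetric p (c • v) w = c * hyperbolicMetric p v w := by
  simp only [hyperbolicMetric, dot3, Prod.smul_fst, Prod.smul_snd, smul_eq_mul]
  ring

theorem hyperbolicMetric_smul_right (p v w : ℝ × ℝ × ℝ) (c : ℝ) :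
    hyperbolicMetric p v (c • w) = c * hyperbolicMetric p v w := by
  simp only [hyperbolicMetric, dot3, Prod.smul_fst, Prod.smul_snd, smul_eq_mul]
  ring

noncomputable def phiPartialR (t r θ : ℝ) : ℝ × ℝ × ℝ :=
  (exp t / cosh r ^ 2 * cos θ, exp t / cosh r ^ 2 * sin θ, -(exp t * sinh r / cosh r ^ 2))

noncomputable def phiPartialθ (t r θ : ℝ) : ℝ × ℝ × ℝ :=
  (-(exp t * tanh r * sin θ), exp t * tanh r * cos θ, 0)

section FermiCoordinates

variable (t r θ : ℝ)

theorem hasDerivAt_Phi_t : HasDerivAt (fun s => Phi (s, r, θ)) (Phi (t, r, θ)) t := by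
  have h := hasDerivAt_exp t
  exact ((h.mul_const (tanh r)).mul_const (cos θ)).prodMk
    (((h.mul_const (tanh r)).mul_const (sin θ)).prodMk (h.div_const (cosh r)))

theorem hasDerivAt_Phi_r : HasDerivAt (fun s => Phi (t, s, θ)) (phiPartialR t r θ) r := by
  have htanh := (hasDerivAt_tanh r).const_mul (exp t)
  have hsech := (hasDerivAt_const r (exp t)).fun_div (hasDerivAt_cosh r) (cosh_pos r).ne'
  refine ((htanh.mul_const (cos θ)).prodMk
    ((htanh.mul_const (sin θ)).prodMk hsech)).congr_deriv ?_
  simp only [phiPartialR, Prod.mk.injEq]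
  refine ⟨?_, ?_, ?_⟩ <;> ring

theorem hasDerivAt_Phi_θ : HasDerivAt (fun s => Phi (t, r, s)) (phiPartialθ t r θ) θ := by
  refine (((hasDerivAt_cos θ).const_mul (exp t * tanh r)).prodMk
    (((hasDerivAt_sin θ).const_mul (exp t * tanh r)).prodMk
    (hasDerivAt_const θ (exp t / cosh r)))).congr_deriv ?_
  simp only [phiPartialθ, mul_neg]

theorem hyperbolicMetric_Phi_t_t :
    hyperbolicMetric (Phi (t, r, θ)) (Phi (t, r, θ)) (Phi (t, r, θ)) = cosh r ^ 2 := by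
  simp only [hyperbolicMetric, dot3, Phi, tanh_eq_sinh_div_cosh]
  field_simp
  linear_combination sinh r ^ 2 * cos_sq_add_sin_sq θ - cosh_sq r

theorem hyperbolicMetric_Phi_r_r :
    hyperbolicMetric (Phi (t, r, θ)) (phiPartialR t r θ) (phiPartialR t r θ) = 1 := by
  simp only [hyperbolicMetric, dot3, Phi, phiPartialR, tanh_eq_sinh_div_cosh]
  field_simp
  linear_combination cos_sq_add_sin_sq θ - cosh_sq r

theorem hyperbolicMetric_Phi_θ_θ :
    hyperbolicMetric (Phi (t, r, θ)) (phiPartialθ t r θ) (phiPartialθ t r θ) = sinh r ^ 2 := by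
  simp only [hyperbolicMetric, dot3, Phi, phiPartialθ, tanh_eq_sinh_div_cosh]
  field_simp
  linear_combination exp t ^ 2 * sinh r ^ 2 * sin_sq_add_cos_sq θ

theorem hyperbolicMetric_Phi_t_r :
    hyperbolicMetric (Phi (t, r, θ)) (Phi (t, r, θ)) (phiPartialR t r θ) = 0 := by
  simp only [hyperbolicMetric, dot3, Phi, phiPartialR, tanh_eq_sinh_div_cosh]
  field_simp
  linear_combination sinh r * cos_sq_add_sin_sq θ

theorem hyperbolicMetric_Phi_t_θ :
    hyperbolicMetric (Phi (t, r, θ)) (Phi (t, r, θ)) (phiPartialθ t r θ) = 0 := by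
  simp only [hyperbolicMetric, dot3, Phi, phiPartialθ, tanh_eq_sinh_div_cosh]
  field_simp
  ring

theorem hyperbolicMetric_Phi_r_θ :
    hyperbolicMetric (Phi (t, r, θ)) (phiPartialR t r θ) (phiPartialθ t r θ) = 0 := by
  simp only [hyperbolicMetric, dot3, Phi, phiPartialR, phiPartialθ, tanh_eq_sinh_div_cosh]
  field_simp
  ring

end FermiCoordinates

theorem differentiable_Psi : Differentiable ℝ Psi := by
  have := differentiable_tanh
  unfold Psi Phi
  -- `fun_prop` knows the quotient rule only for functions of a scalar variable
  simp_rw [div_eq_mul_inv]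
  fun_prop (disch := intro; positivity)

section ReparametrisedFermiCoordinates

variable (t R θ : ℝ)

theorem fderiv_Psi_apply_t : fderiv ℝ Psi (t, R, θ) (1, 0, 0) = Phi (t, arsinh R, θ) :=
  fderiv_apply_eq_of_hasDerivAt_comp (γ := fun s => (s, R, θ)) (differentiable_Psi _)
    ((hasDerivAt_id t).prodMk (hasDerivAt_const t (R, θ))) (hasDerivAt_Phi_t t (arsinh R) θ)

theorem fderiv_Psi_apply_R :
    fderiv ℝ Psi (t, R, θ) (0, 1, 0) = (√(1 + R ^ 2))⁻¹ • phiPartialR t (arsinh R) θ :=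
  fderiv_apply_eq_of_hasDerivAt_comp (γ := fun s => (t, s, θ)) (differentiable_Psi _)
    ((hasDerivAt_const R t).prodMk ((hasDerivAt_id R).prodMk (hasDerivAt_const R θ)))
    ((hasDerivAt_Phi_r t (arsinh R) θ).scomp R (hasDerivAt_arsinh R))

theorem fderiv_Psi_apply_θ : fderiv ℝ Psi (t, R, θ) (0, 0, 1) = phiPartialθ t (arsinh R) θ :=
  fderiv_apply_eq_of_hasDerivAt_comp (γ := fun s => (t, R, s)) (differentiable_Psi _)
    ((hasDerivAt_const θ t).prodMk ((hasDerivAt_const θ R).prodMk (hasDerivAt_id θ)))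
    (hasDerivAt_Phi_θ t (arsinh R) θ)

end ReparametrisedFermiCoordinates

theorem pullback_metric_in_reparametrised_polar_coordinates (t R θ : ℝ) :
    let p := Psi (t, R, θ)
    let D := fderiv ℝ Psi (t, R, θ)
    -- the hyperbolic metric `g = t⁻² δᵢⱼ` at the point `p`:
    let g : (ℝ × ℝ × ℝ) → (ℝ × ℝ × ℝ) → ℝ := fun v w => (p.2.2)⁻¹ ^ 2 * dot3 v w
    g (D (1, 0, 0)) (D (1, 0, 0)) = 1 + R ^ 2 ∧
    g (D (0, 1, 0)) (D (0, 1, 0)) = (1 + R ^ 2)⁻¹ ∧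
    g (D (0, 0, 1)) (D (0, 0, 1)) = R ^ 2 ∧
    g (D (1, 0, 0)) (D (0, 1, 0)) = 0 ∧
    g (D (1, 0, 0)) (D (0, 0, 1)) = 0 ∧
    g (D (0, 1, 0)) (D (0, 0, 1)) = 0 := by
  intro p D g
  have hg : g = hyperbolicMetric (Phi (t, arsinh R, θ)) := rfl
  simp only [hg, D, fderiv_Psi_apply_t, fderiv_Psi_apply_R, fderiv_Psi_apply_θ,
    hyperbolicMetric_smul_left, hyperbolicMetric_smul_right,
    hyperbolicMetric_Phi_t_t, hyperbolicMetric_Phi_r_r, hyperbolicMetric_Phi_θ_θ,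
    hyperbolicMetric_Phi_t_r, hyperbolicMetric_Phi_t_θ, hyperbolicMetric_Phi_r_θ, cosh_sq',
    sinh_arsinh, mul_zero, mul_one, true_and, and_true]
  rw [← mul_inv, mul_self_sqrt (by positivity)]
end

section
/- Let 0 < k < 1, λ = √(1−k), and let f : [0,∞) → (0,∞) satisfy f^{(j+2)} = f^{(j)}·(1−k) + Σ_{i=0}^{j} ε_i·f^{(i)} for all j ≥ 0, where each ε_i(t) → 0 as t → ∞, and suppose that for some δ ∈ (0,λ) and T, B > A > 0 one has A·e^{−(λ+δ)t} ≤ f(t), −f'(t) ≤ B·e^{−(λ−δ)t} for t > T. Then for every integer m ≥ 2 there exist constants B_m > A_m > 0 and T_m such that A_m·e^{−(λ+δ)t} ≤ (−1)^m·f^{(m)}(t) ≤ B_m·e^{−(λ−δ)t} for all t > T_m. -/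
/-!
With `u = -f'/f`, the equation `f'' = (λ² + ε₀) f` becomes the Riccati equation
`u' = u² - λ² - ε₀`. Once `u` drops below a level `a ∈ (0, λ)` it keeps decreasing at a
linear rate and would become negative, contradicting `f' < 0 < f`; once it exceeds a level
`a > λ` it grows linearly, so `f` decays faster than any exponential, contradicting
`f ≥ A e^{-(λ+δ)t}`. Hence `f'/f → -λ`, and the recursion gives `f^{(m)}/f → (-λ)^m` by
strong induction, so `(-1)^m f^{(m)}` inherits the exponential bounds of `f`.
-/

open Real Filter Topology Set

lemma image_le_const_of_deriv_neg_boundary {u u' : ℝ → ℝ} {t₀ a : ℝ}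
    (hu : ∀ t ≥ t₀, HasDerivAt u (u' t) t) (h₀ : u t₀ ≤ a)
    (hbd : ∀ t ≥ t₀, u t = a → u' t < 0) : ∀ t ≥ t₀, u t ≤ a := fun _ ht =>
  image_le_of_deriv_right_lt_deriv_boundary (B := fun _ => a) (B' := 0)
    (fun x hx => (hu x hx.1).continuousAt.continuousWithinAt)
    (fun x hx => (hu x hx.1).hasDerivWithinAt) h₀ (fun _ => hasDerivAt_const _ _)
    (fun x hx => hbd x hx.1) ⟨ht, le_rfl⟩

lemma tendsto_atTop_of_hasDerivAt_ge {g g' : ℝ → ℝ} {t₀ a : ℝ} (ha : 0 < a)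
    (hg : ∀ t ≥ t₀, HasDerivAt g (g' t) t) (hg' : ∀ t ≥ t₀, a ≤ g' t) :
    Tendsto g atTop atTop := by
  have hgrowth : ∀ t ≥ t₀, a * (t - t₀) ≤ g t - g t₀ := by
    refine fun t ht => (convex_Ici t₀).mul_sub_le_image_sub_of_le_deriv
      (fun x hx => (hg x hx).continuousAt.continuousWithinAt)
      (fun x hx => (hg x (interior_subset hx)).differentiableAt.differentiableWithinAt)
      (fun x hx => ?_) t₀ self_mem_Ici t ht ht
    rw [(hg x (interior_subset hx)).deriv]
    exact hg' x (interior_subset hx)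
  have hlin : Tendsto (fun t => g t₀ + a * (t - t₀)) atTop atTop :=
    tendsto_atTop_add_const_left _ _
      ((tendsto_atTop_add_const_right _ _ tendsto_id).const_mul_atTop ha)
  refine tendsto_atTop_mono' _ ?_ hlin
  filter_upwards [eventually_ge_atTop t₀] with t ht
  linarith [hgrowth t ht]

section Riccati

variable {u e : ℝ → ℝ} {c : ℝ}

lemma riccati_eventually_gt (hu : ∀ᶠ t in atTop, HasDerivAt u (u t ^ 2 - c ^ 2 - e t) t)
    (he : Tendsto e atTop (𝓝 0)) (hpos : ∀ᶠ t in atTop, 0 < u t) {a : ℝ} (ha : 0 < a)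
    (hac : a < c) : ∀ᶠ t in atTop, a < u t := by
  set d := (c ^ 2 - a ^ 2) / 2 with hd_def
  have hd : 0 < d := by rw [hd_def]; nlinarith
  have he_gt : ∀ᶠ t in atTop, -d < e t := he.eventually (lt_mem_nhds (neg_lt_zero.2 hd))
  obtain ⟨t₁, ht₁⟩ := eventually_atTop.1 (hu.and (hpos.and he_gt))
  filter_upwards [eventually_ge_atTop t₁] with t₀ ht₀
  by_contra! hle₀
  have hle : ∀ t ≥ t₀, u t ≤ a := by
    refine image_le_const_of_deriv_neg_boundary (fun t ht => (ht₁ t (ht₀.trans ht)).1) hle₀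
      fun t ht hut => ?_
    have := (ht₁ t (ht₀.trans ht)).2.2
    rw [hut]
    linarith [hd_def]
  have hdecr : Tendsto (fun t => -u t) atTop atTop := by
    refine tendsto_atTop_of_hasDerivAt_ge hd (fun t ht => (ht₁ t (ht₀.trans ht)).1.neg)
      fun t ht => ?_
    obtain ⟨-, hut, het⟩ := ht₁ t (ht₀.trans ht)
    nlinarith [hle t ht, hd_def]
  obtain ⟨t, hneg, hpos_t⟩ := ((hdecr.eventually_gt_atTop 0).and hpos).exists
  linarith

lemma riccati_tendsto_atTop (hu : ∀ᶠ t in atTop, HasDerivAt u (u t ^ 2 - c ^ 2 - e t) t)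
    (he : Tendsto e atTop (𝓝 0)) (hc : 0 ≤ c) {a : ℝ} (hca : c < a) :
    ∀ᶠ t in atTop, a ≤ u t → Tendsto u atTop atTop := by
  set d := (a ^ 2 - c ^ 2) / 2 with hd_def
  have hd : 0 < d := by rw [hd_def]; nlinarith
  have he_lt : ∀ᶠ t in atTop, e t < d := he.eventually (gt_mem_nhds hd)
  obtain ⟨t₁, ht₁⟩ := eventually_atTop.1 (hu.and he_lt)
  filter_upwards [eventually_ge_atTop t₁] with t₀ ht₀ hge₀
  have hge : ∀ t ≥ t₀, a ≤ u t := by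
    have := image_le_const_of_deriv_neg_boundary
      (fun t ht => (ht₁ t (ht₀.trans ht)).1.neg) (neg_le_neg hge₀) fun t ht hut => ?_
    · exact fun t ht => neg_le_neg_iff.1 (this t ht)
    have := (ht₁ t (ht₀.trans ht)).2
    rw [neg_inj.1 hut]
    linarith [hd_def]
  refine tendsto_atTop_of_hasDerivAt_ge hd (fun t ht => (ht₁ t (ht₀.trans ht)).1)
    fun t ht => ?_
  have := (ht₁ t (ht₀.trans ht)).2
  nlinarith [hge t ht, hd_def]

end Riccati

lemma hasDerivAt_logDeriv {f : ℝ → ℝ} (hf : ContDiff ℝ 2 f) {t : ℝ} (ht : f t ≠ 0) :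
    HasDerivAt (logDeriv f) (deriv (deriv f) t / f t - logDeriv f t ^ 2) t := by
  have hf' : HasDerivAt (deriv f) (deriv (deriv f) t) t :=
    (hf.differentiable_deriv_two t).hasDerivAt
  have hf₁ : HasDerivAt f (deriv f t) t :=
    ((hf.differentiable (by norm_num)) t).hasDerivAt
  refine (hf'.div hf₁ ht).congr_deriv ?_
  rw [logDeriv_apply]
  field_simp

lemma exists_mul_exp_le_of_tendsto_neg_logDeriv {f : ℝ → ℝ} (hf : Differentiable ℝ f)
    (hpos : ∀ᶠ t in atTop, 0 < f t) (h : Tendsto (fun t => -logDeriv f t) atTop atTop)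
    (μ : ℝ) : ∃ C, ∀ᶠ t in atTop, f t * exp (μ * t) ≤ C := by
  obtain ⟨t₀, ht₀⟩ := eventually_atTop.1 (hpos.and (h.eventually_ge_atTop μ))
  have hderiv : ∀ t, HasDerivAt (fun s => f s * exp (μ * s))
      ((deriv f t + μ * f t) * exp (μ * t)) t := fun t => by
    refine ((hf t).hasDerivAt.mul ((hasDerivAt_id t).const_mul μ).exp).congr_deriv ?_
    simp only [id, mul_one]
    ring
  have hanti : AntitoneOn (fun s => f s * exp (μ * s)) (Ici t₀) := by
    refine antitoneOn_of_hasDerivWithinAt_nonpos (convex_Ici t₀)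
      (fun t _ => (hderiv t).continuousAt.continuousWithinAt)
      (fun t _ => (hderiv t).hasDerivWithinAt) fun t ht => ?_
    obtain ⟨hft, hμ⟩ := ht₀ t (interior_subset ht)
    rw [logDeriv_apply, neg_div', le_div_iff₀ hft] at hμ
    exact mul_nonpos_of_nonpos_of_nonneg (by linarith) (exp_pos _).le
  exact ⟨f t₀ * exp (μ * t₀), eventually_atTop.2 ⟨t₀, fun t ht => hanti self_mem_Ici ht ht⟩⟩

lemma tendsto_neg_logDeriv_of_deriv_deriv_eq {f e : ℝ → ℝ} {c A μ : ℝ} (hc : 0 < c)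
    (hf : ContDiff ℝ 2 f) (hode : ∀ᶠ t in atTop, deriv (deriv f) t = (c ^ 2 + e t) * f t)
    (he : Tendsto e atTop (𝓝 0)) (hA : 0 < A)
    (hlow : ∀ᶠ t in atTop, A * exp (-μ * t) ≤ f t) (hderiv : ∀ᶠ t in atTop, deriv f t < 0) :
    Tendsto (fun t => -logDeriv f t) atTop (𝓝 c) := by
  have hfpos : ∀ᶠ t in atTop, 0 < f t :=
    hlow.mono fun t ht => (mul_pos hA (exp_pos _)).trans_le ht
  have hu : ∀ᶠ t in atTop,
      HasDerivAt (fun t => -logDeriv f t) ((-logDeriv f t) ^ 2 - c ^ 2 - e t) t := by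
    filter_upwards [hfpos, hode] with t hft hode_t
    refine (hasDerivAt_logDeriv hf hft.ne').neg.congr_deriv ?_
    rw [hode_t, logDeriv_apply]
    field_simp
    ring
  have hupos : ∀ᶠ t in atTop, 0 < -logDeriv f t := by
    filter_upwards [hfpos, hderiv] with t hft hdt
    rw [logDeriv_apply, neg_div']
    exact div_pos (neg_pos.2 hdt) hft
  refine tendsto_order.2 ⟨fun a hac => ?_, fun a hca => ?_⟩
  · rcases le_or_gt a 0 with ha | ha
    · exact hupos.mono fun t ht => ha.trans_lt ht
    · exact riccati_eventually_gt hu he hupos ha hac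
  · by_contra hfreq
    rw [not_eventually] at hfreq
    obtain ⟨t₀, hge, himp⟩ :=
      ((hfreq.mono fun t ht => le_of_not_gt ht).and_eventually
        (riccati_tendsto_atTop hu he hc.le hca)).exists
    obtain ⟨C, hC⟩ := exists_mul_exp_le_of_tendsto_neg_logDeriv
      (hf.differentiable (by norm_num)) hfpos (himp hge) (μ + 1)
    have hbounded : ∀ᶠ t in atTop, A * exp t ≤ C := by
      filter_upwards [hlow, hC] with t hlow_t hC_t
      calc A * exp t = A * exp (-μ * t) * exp ((μ + 1) * t) := by
            rw [mul_assoc, ← exp_add]; ring_nf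
        _ ≤ f t * exp ((μ + 1) * t) := by gcongr
        _ ≤ C := hC_t
    obtain ⟨t, hle, hgt⟩ :=
      (hbounded.and ((tendsto_exp_atTop.const_mul_atTop hA).eventually_gt_atTop C)).exists
    exact hle.not_gt hgt

lemma tendsto_iteratedDeriv_div_of_recurrence {f : ℝ → ℝ} {eps : ℕ → ℝ → ℝ} {c : ℝ}
    (hrec : ∀ j : ℕ, ∀ᶠ t in atTop, iteratedDeriv (j + 2) f t
      = iteratedDeriv j f t * c ^ 2 + ∑ i ∈ Finset.range (j + 1), eps i t * iteratedDeriv i f t)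
    (heps : ∀ i, Tendsto (eps i) atTop (𝓝 0)) (hpos : ∀ᶠ t in atTop, f t ≠ 0)
    (hlog : Tendsto (logDeriv f) atTop (𝓝 (-c))) :
    ∀ m : ℕ, Tendsto (fun t => iteratedDeriv m f t / f t) atTop (𝓝 ((-c) ^ m))
  | 0 => tendsto_const_nhds.congr' (hpos.mono fun t ht => by simp [ht])
  | 1 => by
    rw [pow_one]
    exact hlog.congr fun t => by rw [logDeriv_apply, iteratedDeriv_one]
  | j + 2 => by
    have hlim := ((tendsto_iteratedDeriv_div_of_recurrence hrec heps hpos hlog j).mul_const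
      (c ^ 2)).add (tendsto_finsetSum (Finset.range (j + 1)) fun i hi =>
        (heps i).mul (tendsto_iteratedDeriv_div_of_recurrence hrec heps hpos hlog i))
    rw [show (-c) ^ j * c ^ 2 + ∑ i ∈ Finset.range (j + 1), 0 * (-c) ^ i = (-c) ^ (j + 2) by
      simp [pow_add]] at hlim
    refine hlim.congr' ?_
    filter_upwards [hrec j] with t ht
    rw [ht, add_div, Finset.sum_div, mul_div_right_comm]
    simp only [mul_div_assoc]
  decreasing_by all_goals grind

lemma exists_bounds_of_tendsto_div {f g p q : ℝ → ℝ} {L A B : ℝ} (hL : 0 < L) (hA : 0 < A)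
    (hAB : A < B) (hp : ∀ t, 0 < p t) (hlim : Tendsto (fun t => g t / f t) atTop (𝓝 L))
    (hf : ∀ᶠ t in atTop, A * p t ≤ f t ∧ f t ≤ B * q t) :
    ∃ T A' B', 0 < A' ∧ A' < B' ∧ ∀ t > T, A' * p t ≤ g t ∧ g t ≤ B' * q t := by
  have hratio : ∀ᶠ t in atTop, L / 2 < g t / f t ∧ g t / f t < 2 * L :=
    (hlim.eventually (lt_mem_nhds (by linarith))).and
      (hlim.eventually (gt_mem_nhds (by linarith)))
  obtain ⟨T, hT⟩ := eventually_atTop.1 (hratio.and hf)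
  refine ⟨T, L / 2 * A, 2 * L * B, by positivity, by nlinarith, fun t ht => ?_⟩
  obtain ⟨⟨hlo, hhi⟩, hfA, hfB⟩ := hT t ht.le
  have hft : 0 < f t := (mul_pos hA (hp t)).trans_le hfA
  rw [lt_div_iff₀ hft] at hlo
  rw [div_lt_iff₀ hft] at hhi
  constructor <;> nlinarith

theorem higher_derivatives_decay_exponentially_general
    (k lam δ T A B : ℝ) (hk1 : k < 1)
    (hlam : lam = Real.sqrt (1 - k))
    (hA : 0 < A) (hAB : A < B)
    (f : ℝ → ℝ) (eps : ℕ → ℝ → ℝ)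
    (hf : ∀ n : ℕ, ContDiff ℝ n f)
    (hrec : ∀ (j : ℕ), ∀ t ≥ (0:ℝ), iteratedDeriv (j + 2) f t
      = iteratedDeriv j f t * (1 - k)
        + ∑ i ∈ Finset.range (j + 1), eps i t * iteratedDeriv i f t)
    (heps : ∀ i, Tendsto (eps i) atTop (nhds 0))
    (hdecay : ∀ t > T,
      (A * Real.exp (-(lam + δ) * t) ≤ f t ∧ f t ≤ B * Real.exp (-(lam - δ) * t)) ∧
      (A * Real.exp (-(lam + δ) * t) ≤ -deriv f t ∧
        -deriv f t ≤ B * Real.exp (-(lam - δ) * t))) :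
    ∀ m : ℕ, 2 ≤ m → ∃ Tm Am Bm : ℝ, 0 < Am ∧ Am < Bm ∧ ∀ t > Tm,
      Am * Real.exp (-(lam + δ) * t) ≤ (-1) ^ m * iteratedDeriv m f t ∧
      (-1) ^ m * iteratedDeriv m f t ≤ Bm * Real.exp (-(lam - δ) * t) := by
  intro m _
  have hlam0 : 0 < lam := hlam ▸ sqrt_pos.2 (by linarith)
  have hlamsq : lam ^ 2 = 1 - k := hlam ▸ sq_sqrt (by linarith)
  have hf2 : ContDiff ℝ 2 f := by exact_mod_cast hf 2
  have hdecay' : ∀ᶠ t in atTop, _ := eventually_gt_atTop T |>.mono hdecay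
  have hrec' : ∀ j : ℕ, ∀ᶠ t in atTop, iteratedDeriv (j + 2) f t = iteratedDeriv j f t * lam ^ 2
      + ∑ i ∈ Finset.range (j + 1), eps i t * iteratedDeriv i f t := fun j =>
    (eventually_ge_atTop 0).mono fun t ht => hlamsq ▸ hrec j t ht
  have hode : ∀ᶠ t in atTop, deriv (deriv f) t = (lam ^ 2 + eps 0 t) * f t :=
    (hrec' 0).mono fun t ht => by
      simp only [iteratedDeriv_succ, iteratedDeriv_zero, zero_add, Finset.sum_range_one] at ht
      rw [ht]; ring
  have hderiv : ∀ᶠ t in atTop, deriv f t < 0 := hdecay'.mono fun t ht => by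
    linarith [ht.2.1, mul_pos hA (exp_pos (-(lam + δ) * t))]
  have hlog : Tendsto (logDeriv f) atTop (𝓝 (-lam)) := by
    simpa using (tendsto_neg_logDeriv_of_deriv_deriv_eq hlam0 hf2 hode (heps 0) hA
      (hdecay'.mono fun t ht => ht.1.1) hderiv).neg
  have hratio := tendsto_iteratedDeriv_div_of_recurrence hrec' heps
    (hdecay'.mono fun t ht => ((mul_pos hA (exp_pos _)).trans_le ht.1.1).ne') hlog m
  refine exists_bounds_of_tendsto_div (pow_pos hlam0 m) hA hAB (fun t => exp_pos _) ?_
    (hdecay'.mono fun t ht => ht.1)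
  convert hratio.const_mul ((-1) ^ m) using 1
  · simp only [mul_div_assoc]
  · rw [← mul_pow, neg_one_mul, neg_neg]

theorem higher_derivatives_decay_exponentially
    (k lam δ T A B : ℝ) (hk : 0 < k) (hk1 : k < 1)
    (hlam : lam = Real.sqrt (1 - k)) (hδ : δ ∈ Set.Ioo 0 lam)
    (hA : 0 < A) (hAB : A < B)
    (f : ℝ → ℝ) (eps : ℕ → ℝ → ℝ)
    (hf : ∀ n : ℕ, ContDiff ℝ n f) (hpos : ∀ t ≥ (0:ℝ), 0 < f t)
    (hrec : ∀ (j : ℕ), ∀ t ≥ (0:ℝ), iteratedDeriv (j + 2) f t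
      = iteratedDeriv j f t * (1 - k)
        + ∑ i ∈ Finset.range (j + 1), eps i t * iteratedDeriv i f t)
    (heps : ∀ i, Tendsto (eps i) atTop (nhds 0))
    (hdecay : ∀ t > T,
      (A * Real.exp (-(lam + δ) * t) ≤ f t ∧ f t ≤ B * Real.exp (-(lam - δ) * t)) ∧
      (A * Real.exp (-(lam + δ) * t) ≤ -deriv f t ∧
        -deriv f t ≤ B * Real.exp (-(lam - δ) * t))) :
    ∀ m : ℕ, 2 ≤ m → ∃ Tm Am Bm : ℝ, 0 < Am ∧ Am < Bm ∧ ∀ t > Tm,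
      Am * Real.exp (-(lam + δ) * t) ≤ (-1) ^ m * iteratedDeriv m f t ∧
      (-1) ^ m * iteratedDeriv m f t ≤ Bm * Real.exp (-(lam - δ) * t) :=
  higher_derivatives_decay_exponentially_general k lam δ T A B hk1 hlam hA hAB f eps hf hrec heps
    hdecay
end

section
/- Let λ > 0, δ ∈ (0,λ), and let h : [0,∞) → ℝ be a C¹ function satisfying h' + h² = λ² + ε where ε(t) → 0 as t → ∞. Then there exists T > 0 (depending only on ε, λ, δ) such that if h(t₀) < −λ − δ for some t₀ > T, then h blows up to −∞ in finite time; hence if h exists for all t ≥ 0, then h(t) ≥ −λ − δ for all sufficiently large t. -/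
open Real Filter

lemma riccati_key (lam δ : ℝ) (hlam : 0 < lam) (hδ0 : 0 < δ)
    (eps : ℝ → ℝ) (t₀ : ℝ)
    (hE : ∀ t ∈ Set.Ici t₀, eps t < lam * δ)
    (h : ℝ → ℝ)
    (hd : ∀ t ∈ Set.Ici t₀, HasDerivAt h (lam ^ 2 - h t ^ 2 + eps t) t) :
    -lam - δ ≤ h t₀ := by
  by_contra hcon
  push_neg at hcon
  set b : ℝ := -lam - δ with hb
  have hcont : ContinuousOn h (Set.Ici t₀) :=
    fun t ht => (hd t ht).continuousAt.continuousWithinAt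
  -- Step 1: h stays strictly below the barrier b
  have hbar : ∀ t ∈ Set.Ici t₀, h t < b := by
    by_contra hex
    push_neg at hex
    obtain ⟨t₁, ht₁, hbt₁⟩ := hex
    set C : Set ℝ := Set.Icc t₀ t₁ ∩ h ⁻¹' Set.Ici b with hC
    have hCsub : Set.Icc t₀ t₁ ⊆ Set.Ici t₀ := Set.Icc_subset_Ici_self
    have hCclosed : IsClosed C :=
      (hcont.mono hCsub).preimage_isClosed_of_isClosed isClosed_Icc isClosed_Ici
    have hCne : C.Nonempty := ⟨t₁, ⟨ht₁, le_rfl⟩, hbt₁⟩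
    have hCbdd : BddBelow C := ⟨t₀, fun x hx => hx.1.1⟩
    set t₂ := sInf C with ht₂
    have ht₂C : t₂ ∈ C := hCclosed.csInf_mem hCne hCbdd
    have ht₂0 : t₀ < t₂ := by
      rcases lt_or_eq_of_le ht₂C.1.1 with H | H
      · exact H
      · exact absurd ht₂C.2 (by rw [← H]; exact not_le.mpr hcon)
    have hlt : ∀ s ∈ Set.Ico t₀ t₂, h s < b := by
      intro s hs
      by_contra hsb
      push_neg at hsb
      have : s ∈ C := ⟨⟨hs.1, hs.2.le.trans ht₂C.1.2⟩, hsb⟩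
      exact absurd (csInf_le hCbdd this) (not_le.mpr hs.2)
    have hanti : StrictAntiOn h (Set.Icc t₀ t₂) := by
      apply strictAntiOn_of_deriv_neg (convex_Icc _ _)
        (hcont.mono (Set.Icc_subset_Ici_self))
      intro x hx
      rw [interior_Icc] at hx
      have hxI : x ∈ Set.Ici t₀ := le_of_lt hx.1
      rw [(hd x hxI).deriv]
      have h1 : h x < b := hlt x ⟨hx.1.le, hx.2⟩
      have h2 : eps x < lam * δ := hE x hxI
      nlinarith [sq_nonneg (h x + lam + δ)]
    have h1 := hanti (Set.left_mem_Icc.mpr ht₂0.le) (Set.right_mem_Icc.mpr ht₂0.le) ht₂0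
    have h2 : b ≤ h t₂ := ht₂C.2
    linarith
  -- Step 2: g = 1/h grows linearly, contradiction
  have hneg : ∀ t ∈ Set.Ici t₀, h t < 0 := by
    intro t ht; have := hbar t ht; simp only [hb] at this; linarith
  have hne : ∀ t ∈ Set.Ici t₀, h t ≠ 0 := fun t ht => (hneg t ht).ne
  set θ : ℝ := δ / (lam + δ) with hθ
  have hθpos : 0 < θ := div_pos hδ0 (by linarith)
  set φ : ℝ → ℝ := fun t => (h t)⁻¹ - θ * t with hφ
  have hφd : ∀ t ∈ Set.Ici t₀,
      HasDerivAt φ (-(lam ^ 2 - h t ^ 2 + eps t) / h t ^ 2 - θ) t := by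
    intro t ht
    exact ((hd t ht).inv (hne t ht)).sub ((hasDerivAt_id t).const_mul θ |>.congr_deriv (by ring))
  have hφmono : MonotoneOn φ (Set.Ici t₀) := by
    apply monotoneOn_of_deriv_nonneg (convex_Ici _)
      (fun t ht => (hφd t ht).continuousAt.continuousWithinAt)
      (fun x hx => by
        rw [interior_Ici] at hx
        exact (hφd x (Set.mem_Ici.mpr (Set.mem_Ioi.mp hx).le)).differentiableAt.differentiableWithinAt)
    intro x hx
    rw [interior_Ici] at hx
    have hxI : x ∈ Set.Ici t₀ := Set.mem_Ici.mpr (Set.mem_Ioi.mp hx).le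
    rw [(hφd x hxI).deriv]
    have hbx : h x < b := hbar x hxI
    have hex : eps x < lam * δ := hE x hxI
    have hsq : (lam + δ) ^ 2 < h x ^ 2 := by nlinarith
    have hsqpos : (0:ℝ) < h x ^ 2 := by nlinarith
    rw [sub_nonneg, hθ, div_le_div_iff₀ (by linarith) hsqpos]
    nlinarith
  -- evaluate at a far time
  set t₃ : ℝ := t₀ + (1 - (h t₀)⁻¹) / θ with ht₃
  have hg0 : (h t₀)⁻¹ < 0 := inv_lt_zero.mpr (hneg t₀ Set.self_mem_Ici)
  have ht₃0 : t₀ ≤ t₃ := by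
    have h0 : 0 ≤ (1 - (h t₀)⁻¹) / θ := div_nonneg (by linarith) hθpos.le
    rw [ht₃]; linarith
  have := hφmono (Set.self_mem_Ici) (Set.mem_Ici.mpr ht₃0) ht₃0
  have hg3 : (h t₃)⁻¹ < 0 := inv_lt_zero.mpr (hneg t₃ ht₃0)
  have hcalc : θ * t₃ = θ * t₀ + (1 - (h t₀)⁻¹) := by
    rw [ht₃]; field_simp
  simp only [hφ] at this
  nlinarith


theorem riccati_lower_barrier (lam δ : ℝ) (hlam : 0 < lam) (hδ : δ ∈ Set.Ioo 0 lam)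
    (eps : ℝ → ℝ) (heps : Tendsto eps atTop (nhds 0)) :
    ∃ T > (0:ℝ),
      -- no solution defined on all of `[t₀, ∞)` with `t₀ > T` can take a value
      -- below `-λ - δ` at `t₀` (such a solution would blow up to `-∞` in finite
      -- time, so could not exist on the whole half-line):
      (∀ t₀ > T, ∀ h : ℝ → ℝ,
        (∀ t ∈ Set.Ici t₀, HasDerivAt h (lam ^ 2 - h t ^ 2 + eps t) t) →
        -lam - δ ≤ h t₀) ∧
      -- hence any global solution on `[0, ∞)` satisfies `h ≥ -λ - δ` eventually:
      (∀ h : ℝ → ℝ,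
        (∀ t ∈ Set.Ici (0:ℝ), HasDerivAt h (lam ^ 2 - h t ^ 2 + eps t) t) →
        ∀ t > T, -lam - δ ≤ h t) := by
  obtain ⟨hδ0, hδlam⟩ := hδ
  have hc : (0:ℝ) < lam * δ := mul_pos hlam hδ0
  have hev : ∀ᶠ t in atTop, eps t < lam * δ := heps.eventually (eventually_lt_nhds hc)
  obtain ⟨N, hN⟩ := eventually_atTop.mp hev
  refine ⟨max N 1, lt_of_lt_of_le one_pos (le_max_right _ _), ?_, ?_⟩
  · intro t₀ ht₀ h hd
    apply riccati_key lam δ hlam hδ0 eps t₀ _ h hd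
    intro t ht
    exact hN t (le_trans (le_trans (le_max_left N 1) ht₀.le) ht)
  · intro h hd t ht
    apply riccati_key lam δ hlam hδ0 eps t _ h
    · intro s hs
      exact hd s (le_trans (le_trans (le_trans zero_le_one (le_max_right N 1)) ht.le) hs)
    · intro s hs
      exact hN s (le_trans (le_trans (le_max_left N 1) ht.le) hs)
end

section
/- Let 0 < k < 1, λ = √(1−k), and let f : [0,∞) → (0,∞) give a surface of revolution Σ_f of constant Gaussian curvature k about a geodesic in ℍ³, with f, f' → 0 at infinity, so that for every δ > 0 there are T, B > A > 0 with A·e^{−(λ+δ)t} ≤ f(t), −f'(t) ≤ B·e^{−(λ−δ)t} for t > T. Define Area(t) = ∫_t^∞ ∫_0^{2π} f·((1+f²) + (f')²(1+f²)^{−1})^{1/2} dθ ds (the hyperbolic area of Σ_f over [t,∞)) and Vol(t) = ∫_t^∞ ∫_0^{2π} ∫_0^{f(s)} R dR dθ ds (the hyperbolic volume enclosed over [t,∞)). Then for every δ > 0 there exist T' > 0 and constants B' > A' > 0 such that for t > T': A'·e^{−(λ+δ)t} ≤ Area(t) ≤ B'·e^{−(λ−δ)t} and A'·e^{−2(λ+δ)t}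 ≤ Vol(t) ≤ B'·e^{−2(λ−δ)t}. -/
open Real MeasureTheory

/-- The hyperbolic area of the part of the surface of revolution `R = f(t)`
(in polar coordinates about a geodesic in `ℍ³`) lying over `[t, ∞)`. -/
noncomputable def cuspArea (f : ℝ → ℝ) (t : ℝ) : ℝ :=
  ∫ s in Set.Ioi t, ∫ _θ in (0:ℝ)..(2 * Real.pi),
    f s * Real.sqrt ((1 + f s ^ 2) + (deriv f s) ^ 2 * (1 + f s ^ 2)⁻¹)

/-- The hyperbolic volume enclosed by the surface of revolution `R = f(t)`
over `[t, ∞)` (the volume form being `R dt ∧ dR ∧ dθ`). -/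
noncomputable def cuspVol (f : ℝ → ℝ) (t : ℝ) : ℝ :=
  ∫ s in Set.Ioi t, ∫ _θ in (0:ℝ)..(2 * Real.pi), ∫ R in (0:ℝ)..(f s), R

open Filter Set Topology

/-! Both quantities are tails `∫ s in Ioi t, ρ s` of densities comparable to `f`: the volume
density is `π f²`, and the area density is `2π f` times a factor tending to `1`, because `f` and
`f'` tend to `0`. Exponential bounds `A e^{-a s} ≤ ρ s ≤ B e^{-b s}` with `a ≥ b > 0` integrate to
bounds of the same shape on the tail, and the rates obtained for a smaller `δ` can be relaxed. -/

theorem setIntegral_exp_neg_mul_Ioi {b : ℝ} (hb : 0 < b) (t : ℝ) :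
    ∫ s in Ioi t, exp (-b * s) = exp (-b * t) / b := by
  simpa [neg_div_neg_eq] using integral_exp_mul_Ioi (neg_neg_iff_pos.2 hb) t

def ExpDecayBetween (g : ℝ → ℝ) (a b : ℝ) : Prop :=
  ∃ A B, 0 < A ∧ A < B ∧
    ∀ᶠ t in atTop, A * exp (-a * t) ≤ g t ∧ g t ≤ B * exp (-b * t)

namespace ExpDecayBetween

variable {g h : ℝ → ℝ} {a b : ℝ}

theorem mono (hg : ExpDecayBetween g a b) {a' b' : ℝ} (ha : a ≤ a') (hb : b' ≤ b) :
    ExpDecayBetween g a' b' := by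
  obtain ⟨A, B, hA, hAB, hev⟩ := hg
  refine ⟨A, B, hA, hAB, ?_⟩
  filter_upwards [hev, eventually_ge_atTop 0] with t ⟨hlo, hhi⟩ ht
  constructor
  · calc A * exp (-a' * t) ≤ A * exp (-a * t) := by gcongr
      _ ≤ g t := hlo
  · calc g t ≤ B * exp (-b * t) := hhi
      _ ≤ B * exp (-b' * t) := by gcongr; exact (hA.trans hAB).le

theorem const_mul (hg : ExpDecayBetween g a b) {c : ℝ} (hc : 0 < c) :
    ExpDecayBetween (fun t => c * g t) a b := by
  obtain ⟨A, B, hA, hAB, hev⟩ := hg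
  refine ⟨c * A, c * B, by positivity, by gcongr, ?_⟩
  filter_upwards [hev] with t ⟨hlo, hhi⟩
  rw [mul_assoc, mul_assoc]
  exact ⟨by gcongr, by gcongr⟩

theorem mul_of_tendsto (hg : ExpDecayBetween g a b) {c : ℝ} (hh : Tendsto h atTop (𝓝 c))
    (hc : 0 < c) : ExpDecayBetween (fun t => g t * h t) a b := by
  obtain ⟨A, B, hA, hAB, hev⟩ := hg
  refine ⟨A * (c / 2), B * (2 * c), by positivity,
    mul_lt_mul hAB (by linarith) (by positivity) (hA.trans hAB).le, ?_⟩
  filter_upwards [hev, hh.eventually (Ioo_mem_nhds (half_lt_self hc) (by linarith : c < 2 * c))]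
    with t ⟨hlo, hhi⟩ ⟨hh_lo, hh_hi⟩
  have hg_nonneg : 0 ≤ g t := (by positivity : 0 ≤ A * exp (-a * t)).trans hlo
  constructor
  · calc A * (c / 2) * exp (-a * t) = A * exp (-a * t) * (c / 2) := by ring
      _ ≤ g t * h t := mul_le_mul hlo hh_lo.le (by positivity) hg_nonneg
  · calc g t * h t ≤ B * exp (-b * t) * (2 * c) :=
          mul_le_mul hhi hh_hi.le (by linarith) (hg_nonneg.trans hhi)
      _ = B * (2 * c) * exp (-b * t) := by ring

theorem pow (hg : ExpDecayBetween g a b) {n : ℕ} (hn : n ≠ 0) :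
    ExpDecayBetween (fun t => g t ^ n) (n * a) (n * b) := by
  obtain ⟨A, B, hA, hAB, hev⟩ := hg
  refine ⟨A ^ n, B ^ n, by positivity, pow_lt_pow_left₀ hAB hA.le hn, ?_⟩
  have hexp (c t : ℝ) : exp (-(n * c) * t) = exp (-c * t) ^ n := by
    rw [← exp_nat_mul]; ring_nf
  filter_upwards [hev] with t ⟨hlo, hhi⟩
  simp only [hexp, ← mul_pow]
  exact ⟨by gcongr, by gcongr; exact (by positivity : 0 ≤ A * _).trans hlo⟩

theorem integral_Ioi (hg : ExpDecayBetween g a b) (hmeas : AEStronglyMeasurable g)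
    (hb : 0 < b) (hba : b ≤ a) :
    ExpDecayBetween (fun t => ∫ s in Ioi t, g s) a b := by
  obtain ⟨A, B, hA, hAB, hev⟩ := hg
  have ha : 0 < a := hb.trans_le hba
  refine ⟨A / a, B / b, by positivity, ?_, ?_⟩
  · calc A / a ≤ A / b := div_le_div_of_nonneg_left hA.le hb hba
      _ < B / b := by gcongr
  obtain ⟨T, hT⟩ := eventually_atTop.1 hev
  filter_upwards [eventually_ge_atTop T] with t ht
  have hbounds (s : ℝ) (hs : s ∈ Ioi t) := hT s (ht.trans hs.out.le)
  have hlow_int := (exp_neg_integrableOn_Ioi t ha).const_mul A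
  have hupp_int := (exp_neg_integrableOn_Ioi t hb).const_mul B
  have hg_int : IntegrableOn g (Ioi t) := by
    refine hupp_int.mono' hmeas.restrict (ae_restrict_of_forall_mem measurableSet_Ioi ?_)
    intro s hs
    obtain ⟨hlo, hhi⟩ := hbounds s hs
    rwa [norm_of_nonneg ((by positivity : 0 ≤ A * exp (-a * s)).trans hlo)]
  constructor
  · calc A / a * exp (-a * t) = ∫ s in Ioi t, A * exp (-a * s) := by
          rw [integral_const_mul, setIntegral_exp_neg_mul_Ioi ha]; ring
      _ ≤ ∫ s in Ioi t, g s :=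
          setIntegral_mono_on hlow_int hg_int measurableSet_Ioi fun s hs => (hbounds s hs).1
  · calc ∫ s in Ioi t, g s ≤ ∫ s in Ioi t, B * exp (-b * s) :=
          setIntegral_mono_on hg_int hupp_int measurableSet_Ioi fun s hs => (hbounds s hs).2
      _ = B / b * exp (-b * t) := by
          rw [integral_const_mul, setIntegral_exp_neg_mul_Ioi hb]; ring

theorem exists_forall_gt {a' b' : ℝ} (hg : ExpDecayBetween g a b)
    (hh : ExpDecayBetween h a' b') :
    ∃ T > (0:ℝ), ∃ A B : ℝ, 0 < A ∧ A < B ∧ ∀ t > T,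
      (A * exp (-a * t) ≤ g t ∧ g t ≤ B * exp (-b * t)) ∧
      (A * exp (-a' * t) ≤ h t ∧ h t ≤ B * exp (-b' * t)) := by
  obtain ⟨A₁, B₁, hA₁, hAB₁, hev₁⟩ := hg
  obtain ⟨A₂, B₂, hA₂, hAB₂, hev₂⟩ := hh
  obtain ⟨T, hT⟩ := eventually_atTop.1 (hev₁.and hev₂)
  refine ⟨max T 1, by positivity, min A₁ A₂, max B₁ B₂, lt_min hA₁ hA₂,
    (min_le_left _ _).trans_lt (hAB₁.trans_le (le_max_left _ _)), fun t ht => ?_⟩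
  obtain ⟨⟨hlo₁, hhi₁⟩, hlo₂, hhi₂⟩ := hT t ((le_max_left T 1).trans ht.le)
  refine ⟨⟨?_, ?_⟩, ?_, ?_⟩
  · exact le_trans (by gcongr; exact min_le_left _ _) hlo₁
  · exact hhi₁.trans (by gcongr; exact le_max_left _ _)
  · exact le_trans (by gcongr; exact min_le_right _ _) hlo₂
  · exact hhi₂.trans (by gcongr; exact le_max_right _ _)

end ExpDecayBetween

theorem tendsto_sqrt_one_add_sq_add_sq_mul_inv {α : Type*} {l : Filter α} {u v : α → ℝ}
    (hu : Tendsto u l (𝓝 0)) (hv : Tendsto v l (𝓝 0)) :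
    Tendsto (fun x => √((1 + u x ^ 2) + v x ^ 2 * (1 + u x ^ 2)⁻¹)) l (𝓝 1) := by
  have hden : Tendsto (fun x => 1 + u x ^ 2) l (𝓝 1) := by
    simpa using tendsto_const_nhds.add (hu.pow 2)
  simpa using (hden.add ((hv.pow 2).mul (hden.inv₀ one_ne_zero))).sqrt

theorem cuspArea_eq (f : ℝ → ℝ) :
    cuspArea f = fun t => ∫ s in Ioi t,
      2 * π * (f s * √((1 + f s ^ 2) + deriv f s ^ 2 * (1 + f s ^ 2)⁻¹)) := by
  ext t
  simp only [cuspArea, intervalIntegral.integral_const, sub_zero, smul_eq_mul]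

theorem cuspVol_eq (f : ℝ → ℝ) : cuspVol f = fun t => ∫ s in Ioi t, π * f s ^ 2 := by
  ext t
  simp only [cuspVol, integral_id, intervalIntegral.integral_const]
  congr 1 with s
  simp only [smul_eq_mul]
  ring

theorem area_and_volume_of_rotationally_symmetric_cusp_general
    (k lam : ℝ) (hk1 : k < 1) (hlam : lam = Real.sqrt (1 - k))
    (f : ℝ → ℝ) (hf : ContDiff ℝ 2 f)
    (hf0 : Filter.Tendsto f Filter.atTop (nhds 0))
    (hf'0 : Filter.Tendsto (deriv f) Filter.atTop (nhds 0))
    -- the exponential decay bounds from the preceding lemma: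
    (hdecay : ∀ δ > (0:ℝ), ∃ T A B : ℝ, 0 < A ∧ A < B ∧ ∀ t > T,
      (A * Real.exp (-(lam + δ) * t) ≤ f t ∧ f t ≤ B * Real.exp (-(lam - δ) * t)) ∧
      (A * Real.exp (-(lam + δ) * t) ≤ -deriv f t ∧
        -deriv f t ≤ B * Real.exp (-(lam - δ) * t))) :
    ∀ δ > (0:ℝ), ∃ T' > (0:ℝ), ∃ A' B' : ℝ, 0 < A' ∧ A' < B' ∧ ∀ t > T',
      (A' * Real.exp (-(lam + δ) * t) ≤ cuspArea f t ∧
        cuspArea f t ≤ B' * Real.exp (-(lam - δ) * t)) ∧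
      (A' * Real.exp (-2 * (lam + δ) * t) ≤ cuspVol f t ∧
        cuspVol f t ≤ B' * Real.exp (-2 * (lam - δ) * t)) := by
  intro δ hδ
  have hlam_pos : 0 < lam := hlam ▸ sqrt_pos.2 (by linarith)
  -- shrinking `δ` keeps the upper rate `lam - δ'` positive, so the bounds on `f` integrate
  set δ' := min δ (lam / 2)
  have hδ' : 0 < δ' := lt_min hδ (half_pos hlam_pos)
  have hδ'_le : δ' ≤ δ := min_le_left _ _
  have hrate : 0 < lam - δ' := by linarith [min_le_right δ (lam / 2)]
  obtain ⟨T, A, B, hA, hAB, hbounds⟩ := hdecay δ' hδ'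
  have hf_decay : ExpDecayBetween f (lam + δ') (lam - δ') :=
    ⟨A, B, hA, hAB, (eventually_gt_atTop T).mono fun t ht => (hbounds t ht).1⟩
  have hf_meas : Measurable f := hf.continuous.measurable
  have hf'_meas : Measurable (deriv f) := measurable_deriv f
  have harea : ExpDecayBetween (cuspArea f) (lam + δ) (lam - δ) := by
    rw [cuspArea_eq]
    refine ((hf_decay.mul_of_tendsto (tendsto_sqrt_one_add_sq_add_sq_mul_inv hf0 hf'0) one_pos).const_mul
      two_pi_pos |>.integral_Ioi (by fun_prop) hrate (by linarith)).mono ?_ ?_ <;> linarith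
  have hvol : ExpDecayBetween (cuspVol f) (2 * (lam + δ)) (2 * (lam - δ)) := by
    rw [cuspVol_eq]
    refine (((hf_decay.pow two_ne_zero).const_mul pi_pos).integral_Ioi (by fun_prop)
      (by push_cast; linarith) (by push_cast; linarith)).mono ?_ ?_ <;> push_cast <;> linarith
  simpa only [← neg_mul] using harea.exists_forall_gt hvol

theorem area_and_volume_of_rotationally_symmetric_cusp
    (k lam : ℝ) (hk : 0 < k) (hk1 : k < 1) (hlam : lam = Real.sqrt (1 - k))
    (f : ℝ → ℝ) (hf : ContDiff ℝ 2 f) (hpos : ∀ t ≥ (0:ℝ), 0 < f t)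
    -- the surface of revolution has constant Gaussian curvature `k`:
    (hcurv : ∀ t ≥ (0:ℝ),
      k * f t * ((1 + f t ^ 2) + (deriv f t) ^ 2 * (1 + f t ^ 2)⁻¹) ^ ((3:ℝ) / 2)
        = (1 + f t ^ 2) * (-(deriv (deriv f) t) * (1 + f t ^ 2)
            + f t * (1 + f t ^ 2) ^ 2 + 3 * f t * (deriv f t) ^ 2))
    (hf0 : Filter.Tendsto f Filter.atTop (nhds 0))
    (hf'0 : Filter.Tendsto (deriv f) Filter.atTop (nhds 0))
    -- the exponential decay bounds from the preceding lemma: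
    (hdecay : ∀ δ > (0:ℝ), ∃ T A B : ℝ, 0 < A ∧ A < B ∧ ∀ t > T,
      (A * Real.exp (-(lam + δ) * t) ≤ f t ∧ f t ≤ B * Real.exp (-(lam - δ) * t)) ∧
      (A * Real.exp (-(lam + δ) * t) ≤ -deriv f t ∧
        -deriv f t ≤ B * Real.exp (-(lam - δ) * t))) :
    ∀ δ > (0:ℝ), ∃ T' > (0:ℝ), ∃ A' B' : ℝ, 0 < A' ∧ A' < B' ∧ ∀ t > T',
      (A' * Real.exp (-(lam + δ) * t) ≤ cuspArea f t ∧
        cuspArea f t ≤ B' * Real.exp (-(lam - δ) * t)) ∧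
      (A' * Real.exp (-2 * (lam + δ) * t) ≤ cuspVol f t ∧
        cuspVol f t ≤ B' * Real.exp (-2 * (lam - δ) * t)) :=
  area_and_volume_of_rotationally_symmetric_cusp_general k lam hk1 hlam f hf hf0 hf'0 hdecay
end
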